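/- Define f_n(t) = Σ_{k=0}^{⌊(n-1)/2⌋} (1/(k+1)) · (n-1)!/(k!·k!·(n-2k-1)!) · t^k and p_m(t) = Σ_{i=0}^{⌊(m-1)/2⌋} (1/(i+1))·C(m-i-2,i)·C(m,i)·t^i for m ≥ 2, with f_1(t)=1. Then for all n ≥ 2: f_n(t) = p_{n+1}(t) - t·Σ_{k=2}^{n-1} p_k(t)·f_{n-k}(t). -/

import Mathlib

open Polynomial Finset

/-- `cyclePoly m` is the Kazhdan–Lusztig polynomial of the `m`-cycle (for `m ≥ 2`):
`p_m(t) = Σ_{i=0}^{⌊(m-1)/2⌋} (1/(i+1))·C(m-i-2,i)·C(m,i)·t^i`. -/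
noncomputable def cyclePoly (m : ℕ) : Polynomial ℚ :=
  ∑ i ∈ range ((m - 1) / 2 + 1),
    Polynomial.C ((1 / (i + 1 : ℚ)) * (Nat.choose (m - i - 2) i) * (Nat.choose m i)) * X ^ i

/-- `fanPoly n = f_n`, the Liu–Xie–Yang closed form for the Kazhdan–Lusztig polynomial of
the fan graph `F_n` (with `f_1 = 1`). -/
noncomputable def fanPoly (n : ℕ) : Polynomial ℚ :=
  ∑ k ∈ range ((n - 1) / 2 + 1),
    Polynomial.C ((1 / (k + 1 : ℚ)) * (Nat.factorial (n - 1)) /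
        ((Nat.factorial k) * (Nat.factorial k) * (Nat.factorial (n - 2 * k - 1)))) * X ^ k

/-!
Put `G = ∑_{n ≥ 1} f_n x^{n+1}` and `P = ∑_{m ≥ 2} p_m x^m`, power series in `x` over `ℚ[t]`.
The recursion is the coefficient of `x^{n+1}` in `P = G + t P G`, which holds because
`P = G / (1 - t G) = ∑_r t^r G^{r+1}`. This last identity is checked coefficientwise:
as `f_{n+1} = ∑_k Cat(k) C(n, 2k) t^k`, `G` is `x² / (1 - x)` times the Catalan series
evaluated at `t x² / (1 - x)²`, so `[t^s x^m] G^{r+1} = [u^s] Cat(u)^{r+1} · C(m - r - 2, 2s + r)`,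
and the coefficients of the powers of the Catalan series are the ballot numbers
`(r + 1) / (r + s + 1) · C(2s + r, s)`. Summing over `r + s = i`, two Vandermonde convolutions
collapse the sum to `C(m - i - 2, i) C(m, i) / (i + 1)`, the coefficient of `t^i` in `p_m`.
-/

theorem Nat.sum_antidiagonal_choose_mul_choose (n p q : ℕ) :
    ∑ ij ∈ antidiagonal n, ij.1.choose p * ij.2.choose q = (n + 1).choose (p + q + 1) := by
  induction n generalizing q with
  | zero => cases p <;> cases q <;> simp [Nat.choose_eq_zero_of_lt]
  | succ n ih =>
    rw [Nat.sum_antidiagonal_succ']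
    cases q with
    | zero =>
      have h := ih 0
      simp only [Nat.choose_zero_right, mul_one] at h ⊢
      rw [h, Nat.choose_succ_succ' (n + 1), add_comm]
    | succ q =>
      have pascal (b : ℕ) : (b + 1).choose (q + 1) = b.choose q + b.choose (q + 1) :=
        Nat.choose_succ_succ' b q
      simp only [pascal, mul_add, sum_add_distrib, ih, Nat.choose_zero_succ, mul_zero, zero_add]
      rw [Nat.choose_succ_succ' (n + 1)]
      ring_nf

theorem Nat.sum_antidiagonal_choose_mul_add_choose (n p q r : ℕ) (hr : r ≤ q) :
    ∑ ij ∈ antidiagonal n, ij.1.choose p * (ij.2 + r).choose q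
      = (n + r + 1).choose (p + q + 1) := by
  induction r generalizing n with
  | zero => simpa using Nat.sum_antidiagonal_choose_mul_choose n p q
  | succ r ih =>
    have h := ih (n + 1) (by omega)
    rw [Nat.sum_antidiagonal_succ', Nat.choose_eq_zero_of_lt (by omega : 0 + r < q), mul_zero,
      zero_add] at h
    simpa only [add_right_comm _ 1 r, add_assoc] using h

theorem Nat.sum_antidiagonal_succ_mul_add_choose (i M : ℕ) :
    ∑ rs ∈ antidiagonal i, (rs.1 + 1) * (rs.2 + M).choose M = (M + i + 2).choose i := by
  have split : ∀ rs ∈ antidiagonal i, (rs.1 + 1) * (rs.2 + M).choose M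
      = rs.1.choose 0 * (rs.2 + M).choose M + rs.1.choose 1 * (rs.2 + M).choose M := by
    intro rs _
    simp [add_mul, add_comm]
  rw [sum_congr rfl split, sum_add_distrib,
    Nat.sum_antidiagonal_choose_mul_add_choose _ _ _ _ le_rfl,
    Nat.sum_antidiagonal_choose_mul_add_choose _ _ _ _ le_rfl, zero_add,
    show 1 + M + 1 = M + 1 + 1 by ring, ← Nat.choose_succ_succ',
    Nat.choose_symm_of_eq_add (show i + M + 1 + 1 = M + 1 + 1 + i by ring)]
  ring_nf

theorem catalan_eq_choose_div (s : ℕ) : (catalan s : ℚ) = (2 * s).choose s / (s + 1) := by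
  rw [eq_div_iff (by positivity), ← Nat.centralBinom_eq_two_mul_choose,
    ← succ_mul_catalan_eq_centralBinom]
  push_cast
  ring

theorem PowerSeries.catalanSeries_pow_add_two (r : ℕ) :
    catalanSeries ^ (r + 2) = catalanSeries ^ (r + 1) + X * catalanSeries ^ (r + 3) := by
  conv_lhs => rw [pow_succ]; arg 2; rw [← catalanSeries_sq_mul_X_add_one]
  ring

theorem PowerSeries.coeff_catalanSeries_pow (r s : ℕ) :
    ((coeff s (catalanSeries ^ (r + 1)) : ℕ) : ℚ)
      = (r + 1) * (2 * s + r).choose s / (s + r + 1) := by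
  induction s generalizing r with
  | zero =>
    rw [coeff_zero_eq_constantCoeff_apply, map_pow, catalanSeries_constantCoeff]
    field_simp
    simp
  | succ s ih =>
    induction r with
    | zero =>
      rw [zero_add, pow_one, catalanSeries_coeff, catalan_eq_choose_div]
      push_cast
      ring_nf
    | succ r ihr =>
      rw [catalanSeries_pow_add_two, map_add, coeff_succ_X_mul, Nat.cast_add, ihr, ih (r + 2),
        show 2 * (s + 1) + (r + 1) = (2 * s + r + 2) + 1 by ring,
        show 2 * (s + 1) + r = 2 * s + r + 2 by ring, show 2 * s + (r + 2) = 2 * s + r + 2 by ring,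
        Nat.choose_succ_succ' (2 * s + r + 2) s]
      have absorb : ((2 * s + r + 2).choose (s + 1) : ℚ) * (s + 1)
          = (2 * s + r + 2).choose s * (s + r + 2) := by
        have := Nat.choose_succ_right_eq (2 * s + r + 2) s
        rw [show 2 * s + r + 2 - s = s + r + 2 by omega] at this
        exact_mod_cast this
      field_simp
      push_cast
      linear_combination (-(s : ℚ) - r - 3) * absorb

theorem sum_antidiagonal_coeff_catalanSeries_pow_mul_choose (i M : ℕ) :
    ∑ rs ∈ antidiagonal i,
        ((PowerSeries.coeff rs.2 (PowerSeries.catalanSeries ^ (rs.1 + 1)) : ℕ) : ℚ)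
          * (M + rs.2).choose (i + rs.2)
      = M.choose i * (M + i + 2).choose i / (i + 1) := by
  have term : ∀ rs ∈ antidiagonal i,
      ((PowerSeries.coeff rs.2 (PowerSeries.catalanSeries ^ (rs.1 + 1)) : ℕ) : ℚ)
          * (M + rs.2).choose (i + rs.2)
        = M.choose i / (i + 1) * ((rs.1 + 1) * (rs.2 + M).choose M : ℕ) := by
    rintro ⟨r, s⟩ hrs
    rw [HasAntidiagonal.mem_antidiagonal] at hrs
    subst hrs
    have h := Nat.choose_mul (n := M + s) (k := r + s + s) (s := s) (by omega)
    rw [Nat.add_sub_cancel, show r + s + s - s = r + s by omega, add_comm M s,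
      Nat.choose_symm_add] at h
    have hQ : ((s + M).choose (r + s + s) : ℚ) * (r + s + s).choose s
        = (s + M).choose M * M.choose (r + s) := by exact_mod_cast h
    rw [PowerSeries.coeff_catalanSeries_pow, add_comm M s]
    push_cast
    rw [show 2 * s + r = r + s + s by ring, show (s : ℚ) + r + 1 = r + s + 1 by ring]
    field_simp
    linear_combination hQ
  rw [sum_congr rfl term, ← mul_sum, ← Nat.cast_sum, Nat.sum_antidiagonal_succ_mul_add_choose]
  ring

theorem Polynomial.coeff_sum_range_C_mul_X_pow {R : Type*} [Semiring R] (a : ℕ → R) (K k : ℕ) :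
    (∑ j ∈ range K, C (a j) * X ^ j).coeff k = if k < K then a k else 0 := by
  simp [coeff_C_mul, coeff_X_pow]

theorem Polynomial.coeff_sum_range_X_pow_mul {R : Type*} [Semiring R] (Q : ℕ → R[X]) (N i : ℕ)
    (hQ : ∀ r, N ≤ r → r ≤ i → (Q r).coeff (i - r) = 0) :
    (∑ r ∈ range N, X ^ r * Q r).coeff i = ∑ rs ∈ antidiagonal i, (Q rs.1).coeff rs.2 := by
  rw [finsetSum_coeff, Nat.sum_antidiagonal_eq_sum_range_succ_mk]
  simp only [coeff_X_pow_mul']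
  rw [← sum_filter]
  apply sum_subset
  · intro r
    simp only [mem_filter, mem_range]
    omega
  · intro r hr hr'
    simp only [mem_filter, mem_range, not_and, not_le] at hr hr'
    exact hQ r (by omega) (by omega)

theorem coeff_fanPoly_succ (n k : ℕ) :
    (fanPoly (n + 1)).coeff k = catalan k * n.choose (2 * k) := by
  rw [fanPoly, coeff_sum_range_C_mul_X_pow]
  split_ifs with hk
  · have h2k : 2 * k ≤ n := by omega
    rw [show n + 1 - 2 * k - 1 = n - 2 * k by omega, Nat.add_sub_cancel, catalan_eq_choose_div,
      Nat.cast_choose ℚ h2k, Nat.cast_choose ℚ (show k ≤ 2 * k by omega),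
      show 2 * k - k = k by omega]
    field_simp
  · rw [Nat.choose_eq_zero_of_lt (by omega), Nat.cast_zero, mul_zero]

theorem coeff_cyclePoly (m i : ℕ) :
    (cyclePoly m).coeff i = (m - i - 2).choose i * m.choose i / (i + 1) := by
  rw [cyclePoly, coeff_sum_range_C_mul_X_pow]
  split_ifs with hi
  · ring
  · rw [Nat.choose_eq_zero_of_lt (by omega), Nat.cast_zero, zero_mul, zero_div]

theorem coeff_coeff_mk_fanPoly_succ_pow (r n s : ℕ) :
    (PowerSeries.coeff n ((PowerSeries.mk fun n => fanPoly (n + 1)) ^ (r + 1))).coeff s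
      = ((PowerSeries.coeff s (PowerSeries.catalanSeries ^ (r + 1)) : ℕ) : ℚ)
        * (n + r).choose (2 * s + r) := by
  induction r generalizing n s with
  | zero => simp [coeff_fanPoly_succ]
  | succ r ih =>
    rw [pow_succ', PowerSeries.coeff_mul, finsetSum_coeff]
    simp only [coeff_mul, ih, PowerSeries.coeff_mk, coeff_fanPoly_succ]
    rw [Finset.sum_comm, pow_succ' _ (r + 1), PowerSeries.coeff_mul, Nat.cast_sum, sum_mul]
    refine sum_congr rfl fun cd hcd => ?_
    rw [HasAntidiagonal.mem_antidiagonal] at hcd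
    have vandermonde := Nat.sum_antidiagonal_choose_mul_add_choose n (2 * cd.1) (2 * cd.2 + r) r
      (by omega)
    rw [show n + r + 1 = n + (r + 1) by ring,
      show 2 * cd.1 + (2 * cd.2 + r) + 1 = 2 * s + (r + 1) by omega] at vandermonde
    rw [← vandermonde, PowerSeries.catalanSeries_coeff, Nat.cast_sum, mul_sum]
    push_cast
    refine sum_congr rfl fun ab _ => ?_
    ring

noncomputable def fanSeries : PowerSeries ℚ[X] :=
  PowerSeries.X ^ 2 * PowerSeries.mk fun n => fanPoly (n + 1)

theorem coeff_fanSeries (m : ℕ) :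
    PowerSeries.coeff m fanSeries = if 2 ≤ m then fanPoly (m - 1) else 0 := by
  rw [fanSeries, PowerSeries.coeff_X_pow_mul', PowerSeries.coeff_mk]
  split_ifs with hm
  · rw [show m - 2 + 1 = m - 1 by omega]
  · rfl

theorem coeff_coeff_fanSeries_pow {m : ℕ} (hm : 2 ≤ m) (r s : ℕ) :
    (PowerSeries.coeff m (fanSeries ^ (r + 1))).coeff s
      = ((PowerSeries.coeff s (PowerSeries.catalanSeries ^ (r + 1)) : ℕ) : ℚ)
        * (m - r - 2).choose (2 * s + r) := by
  rw [fanSeries, mul_pow, ← pow_mul, PowerSeries.coeff_X_pow_mul']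
  split_ifs with h
  · rw [coeff_coeff_mk_fanPoly_succ_pow, show m - 2 * (r + 1) + r = m - r - 2 by omega]
  · rw [coeff_zero, Nat.choose_eq_zero_of_lt (by omega), Nat.cast_zero, mul_zero]

theorem cyclePoly_eq_sum_range {m N : ℕ} (hm : 2 ≤ m) (hN : m ≤ N) :
    cyclePoly m = ∑ r ∈ range N, X ^ r * PowerSeries.coeff m (fanSeries ^ (r + 1)) := by
  ext i
  rw [coeff_sum_range_X_pow_mul _ _ _ fun r hr hri => by
    rw [coeff_coeff_fanSeries_pow hm, Nat.choose_eq_zero_of_lt (by omega), Nat.cast_zero,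
      mul_zero]]
  simp only [coeff_coeff_fanSeries_pow hm, coeff_cyclePoly]
  rcases le_or_gt (i + 2) m with h | h
  · obtain ⟨M, rfl⟩ : ∃ M, m = M + i + 2 := ⟨m - i - 2, by omega⟩
    rw [show M + i + 2 - i - 2 = M by omega,
      ← sum_antidiagonal_coeff_catalanSeries_pow_mul_choose]
    refine sum_congr rfl fun rs hrs => ?_
    rw [HasAntidiagonal.mem_antidiagonal] at hrs
    rw [show M + i + 2 - rs.1 - 2 = M + rs.2 by omega, show 2 * rs.2 + rs.1 = i + rs.2 by omega]
  · rw [Nat.choose_eq_zero_of_lt (by omega), Nat.cast_zero, zero_mul, zero_div, eq_comm]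
    refine sum_eq_zero fun rs hrs => ?_
    rw [HasAntidiagonal.mem_antidiagonal] at hrs
    rw [Nat.choose_eq_zero_of_lt (by omega), Nat.cast_zero, mul_zero]

-- `cyclePoly 0` and `cyclePoly 1` are junk values (both are `1`), hence the cut-off.
noncomputable def cycleSeries : PowerSeries ℚ[X] :=
  PowerSeries.mk fun m => if 2 ≤ m then cyclePoly m else 0

theorem coeff_cycleSeries {m N : ℕ} (hN : m ≤ N) :
    PowerSeries.coeff m cycleSeries
      = ∑ r ∈ range N, X ^ r * PowerSeries.coeff m (fanSeries ^ (r + 1)) := by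
  rw [cycleSeries, PowerSeries.coeff_mk]
  split_ifs with hm
  · exact cyclePoly_eq_sum_range hm hN
  · refine (sum_eq_zero fun r _ => ?_).symm
    rw [fanSeries, mul_pow, ← pow_mul, PowerSeries.coeff_X_pow_mul', if_neg (by omega), mul_zero]

theorem cycleSeries_eq :
    cycleSeries = fanSeries + PowerSeries.C (X : ℚ[X]) * (cycleSeries * fanSeries) := by
  refine PowerSeries.ext fun m => ?_
  have expand : ∀ p ∈ antidiagonal m,
      PowerSeries.coeff p.1 cycleSeries * PowerSeries.coeff p.2 fanSeries
        = ∑ r ∈ range m, X ^ r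
            * (PowerSeries.coeff p.1 (fanSeries ^ (r + 1)) * PowerSeries.coeff p.2 fanSeries) := by
    intro p hp
    rw [coeff_cycleSeries (HasAntidiagonal.antidiagonal.fst_le hp), sum_mul]
    simp only [mul_assoc]
  rw [map_add, PowerSeries.coeff_C_mul, PowerSeries.coeff_mul, sum_congr rfl expand, sum_comm,
    coeff_cycleSeries (Nat.le_succ m), sum_range_succ']
  simp only [← mul_sum, ← PowerSeries.coeff_mul, ← pow_succ]
  rw [add_comm, mul_sum]
  congr 1
  · simp only [pow_zero, zero_add, pow_one, one_mul]
  · refine sum_congr rfl fun r _ => ?_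
    ring

theorem sum_antidiagonal_coeff_cycleSeries_mul_coeff_fanSeries (n : ℕ) :
    ∑ p ∈ antidiagonal (n + 1),
        PowerSeries.coeff p.1 cycleSeries * PowerSeries.coeff p.2 fanSeries
      = ∑ k ∈ Icc 2 (n - 1), cyclePoly k * fanPoly (n - k) := by
  rw [Nat.sum_antidiagonal_eq_sum_range_succ_mk]
  simp only [cycleSeries, PowerSeries.coeff_mk, coeff_fanSeries]
  refine (sum_subset (fun k hk => ?_) fun k hk hk' => ?_).symm.trans
    (sum_congr rfl fun k hk => ?_)
  · rw [mem_Icc] at hk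
    rw [mem_range]
    omega
  · rw [mem_range] at hk
    rw [mem_Icc] at hk'
    split_ifs <;> first | omega | simp
  · rw [mem_Icc] at hk
    rw [if_pos hk.1, if_pos (by omega), show n + 1 - k - 1 = n - k by omega]

theorem fanPoly_recursion (n : ℕ) (hn : 2 ≤ n) :
    fanPoly n = cyclePoly (n + 1) - X * ∑ k ∈ Icc 2 (n - 1), cyclePoly k * fanPoly (n - k) := by
  have h := congrArg (PowerSeries.coeff (n + 1)) cycleSeries_eq
  rw [map_add, PowerSeries.coeff_C_mul, PowerSeries.coeff_mul,
    sum_antidiagonal_coeff_cycleSeries_mul_coeff_fanSeries, coeff_fanSeries, if_pos (by omega),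
    Nat.add_sub_cancel, cycleSeries, PowerSeries.coeff_mk, if_pos (by omega)] at h
  rw [h]
  ring
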